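/- There exist F ∈ ℕ₀ and f_𝕊^{(1)}, …, f_𝕊^{(F)} ∈ 𝒢_𝕊^+, depending only on 𝕊 and on the alphabet sizes m_1,…,m_d, such that for every P_𝕊 ∈ 𝒫_𝕊: max{ max_{ℓ∈[F]} R(P_𝕊, f_𝕊^{(ℓ)}), (1/|𝕊|) max_{S_1,S_2 ∈ 𝕊, S_1∩S_2 ≠ ∅} d_TV(P_{S_1}^{S_1∩S_2}, P_{S_2}^{S_1∩S_2}) } ≤ R(P_𝕊) ≤ max_{ℓ∈[F]} R(P_𝕊, f_𝕊^{(ℓ)})_+ + |𝕊| 2^{|𝕊|+2} max_{S_1,S_2 ∈ 𝕊, S_1∩S_2 ≠ ∅} d_TV(P_{S_1}^{S_1∩S_2}, P_{S_2}^{S_1∩S_2}), where y_+ = max(y,0) and a maximum over an empty index set is interpreted as 0; moreover, for every consistent P_𝕊 ∈ 𝒫_𝕊^cons one has R(P_𝕊) = max_{ℓ∈[F]} R(P_𝕊, f_𝕊^{(ℓ)})_+. -/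
import Mathlib


open Finset

/-- The space `𝒳_S = ∏_{j ∈ S} [m_j]`. -/
abbrev Cell {d : ℕ} (m : Fin d → ℕ) (S : Finset (Fin d)) : Type :=
  ∀ j : {x : Fin d // x ∈ S}, Fin (m j.1)

/-- The full space `𝒳 = ∏_{j=1}^d [m_j]`. -/
abbrev Full {d : ℕ} (m : Fin d → ℕ) : Type := ∀ j, Fin (m j)

/-- Coordinate projection `x ↦ x_S`. -/
def proj {d : ℕ} (m : Fin d → ℕ) (S : Finset (Fin d)) (x : Full m) : Cell m S :=
  fun j => x j.1

/-- Coordinate projection `𝒳_S → 𝒳_T` for `T ⊆ S`. -/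
def projSub {d : ℕ} (m : Fin d → ℕ) {S T : Finset (Fin d)} (h : T ⊆ S) (z : Cell m S) :
    Cell m T :=
  fun j => z ⟨j.1, h j.2⟩

/-- `p` is a probability mass function. -/
def IsPMF {α : Type*} [Fintype α] (p : α → ℝ) : Prop :=
  (∀ x, 0 ≤ p x) ∧ ∑ x, p x = 1

/-- `p` is a family of probability mass functions indexed by `𝕊`. -/
def IsFamily {d : ℕ} (m : Fin d → ℕ) (𝕊 : Finset (Finset (Fin d)))
    (p : ∀ S : Finset (Fin d), Cell m S → ℝ) : Prop :=
  ∀ S ∈ 𝕊, IsPMF (p S)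

/-- The family `P_𝕊` is compatible: there is a joint pmf on `𝒳` with the given margins. -/
def Compatible {d : ℕ} (m : Fin d → ℕ) (𝕊 : Finset (Finset (Fin d)))
    (p : ∀ S : Finset (Fin d), Cell m S → ℝ) : Prop :=
  ∃ q : Full m → ℝ, IsPMF q ∧
    ∀ S ∈ 𝕊, ∀ y : Cell m S, p S y = ∑ x : Full m, if proj m S x = y then q x else 0

/-- The marginal mass function of `pS` on `𝒳_T`, for `T ⊆ S`. -/
noncomputable def marg {d : ℕ} (m : Fin d → ℕ) {S : Finset (Fin d)} (T : Finset (Fin d)) (h : T ⊆ S)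
    (pS : Cell m S → ℝ) (y : Cell m T) : ℝ :=
  ∑ z : Cell m S, if projSub m h z = y then pS z else 0

/-- The family `P_𝕊` is consistent: overlapping margins agree. -/
def Consistent {d : ℕ} (m : Fin d → ℕ) (𝕊 : Finset (Finset (Fin d)))
    (p : ∀ S : Finset (Fin d), Cell m S → ℝ) : Prop :=
  ∀ S₁ ∈ 𝕊, ∀ S₂ ∈ 𝕊, (S₁ ∩ S₂).Nonempty →
    marg m (S₁ ∩ S₂) inter_subset_left (p S₁) =
      marg m (S₁ ∩ S₂) inter_subset_right (p S₂)

/-- The class `𝒢_𝕊^+`. -/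
def GPlus {d : ℕ} (m : Fin d → ℕ) (𝕊 : Finset (Finset (Fin d)))
    (f : ∀ S : Finset (Fin d), Cell m S → ℝ) : Prop :=
  (∀ S ∈ 𝕊, ∀ y, -1 ≤ f S y) ∧ ∀ x : Full m, 0 ≤ ∑ S ∈ 𝕊, f S (proj m S x)

/-- The linear functional `R(P_𝕊, f_𝕊)`. -/
noncomputable def RL {d : ℕ} (m : Fin d → ℕ) (𝕊 : Finset (Finset (Fin d)))
    (p f : ∀ S : Finset (Fin d), Cell m S → ℝ) : ℝ :=
  -(1 / (𝕊.card : ℝ)) * ∑ S ∈ 𝕊, ∑ y, f S y * p S y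

/-- The incompatibility index `R(P_𝕊)`. -/
noncomputable def Rix {d : ℕ} (m : Fin d → ℕ) (𝕊 : Finset (Finset (Fin d)))
    (p : ∀ S : Finset (Fin d), Cell m S → ℝ) : ℝ :=
  sSup {t | ∃ f, GPlus m 𝕊 f ∧ t = RL m 𝕊 p f}

/-- Total variation distance between two mass functions on a finite space. -/
noncomputable def dTV {α : Type*} [Fintype α] (p q : α → ℝ) : ℝ :=
  sSup {t | ∃ A : Finset α, t = |∑ y ∈ A, (p y - q y)|}

section Polytope
variable {ι I : Type*} [Fintype ι] [Fintype I]

noncomputable def pdot (c x : ι → ℝ) : ℝ := ∑ j, c j * x j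

lemma pdot_add_smul (a x v : ι → ℝ) (t : ℝ) :
    pdot a (fun j => x j + t * v j) = pdot a x + t * pdot a v := by
  simp only [pdot, Finset.mul_sum, ← Finset.sum_add_distrib]
  exact Finset.sum_congr rfl (fun j _ => by ring)

def Kset (A : I → ι → ℝ) (b : I → ℝ) : Set (ι → ℝ) := {x | ∀ i, pdot (A i) x ≤ b i}

open Classical in
noncomputable def tightSet (A : I → ι → ℝ) (b : I → ℝ) (x : ι → ℝ) : Finset I :=
  Finset.univ.filter (fun i => pdot (A i) x = b i)

def IsVert (A : I → ι → ℝ) (b : I → ℝ) (x : ι → ℝ) : Prop :=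
  x ∈ Kset A b ∧ ∀ y, (∀ i ∈ tightSet A b x, pdot (A i) y = b i) → y = x

lemma mem_tightSet {A : I → ι → ℝ} {b : I → ℝ} {x : ι → ℝ} {i : I} :
    i ∈ tightSet A b x ↔ pdot (A i) x = b i := by
  simp [tightSet]

lemma finite_vert (A : I → ι → ℝ) (b : I → ℝ) : {x | IsVert A b x}.Finite := by
  have : Set.InjOn (tightSet A b) {x | IsVert A b x} := by
    intro x hx y hy hxy
    exact hy.2 x (fun i hi => mem_tightSet.1 (hxy ▸ hi))
  exact Set.Finite.of_finite_image (Set.toFinite _) this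

lemma vert_step {A : I → ι → ℝ} {b : I → ℝ} {R : ℝ}
    (hR : ∀ x ∈ Kset A b, ∀ j, |x j| ≤ R) (c : ι → ℝ)
    {x : ι → ℝ} (hx : x ∈ Kset A b) (hnv : ¬ IsVert A b x) :
    ∃ x', x' ∈ Kset A b ∧ pdot c x ≤ pdot c x' ∧ tightSet A b x ⊂ tightSet A b x' := by
  rw [IsVert, not_and_or] at hnv
  have hnv2 : ¬ ∀ y, (∀ i ∈ tightSet A b x, pdot (A i) y = b i) → y = x := by
    rcases hnv with h | h
    · exact absurd hx h
    · exact h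
  push_neg at hnv2
  obtain ⟨y, hy, hyx⟩ := hnv2
  set v0 : ι → ℝ := fun j => y j - x j with hv0
  have hv0ne : v0 ≠ 0 := by
    intro h
    apply hyx
    funext j
    have := congrFun h j
    simp [hv0] at this
    linarith
  set v : ι → ℝ := if 0 ≤ pdot c v0 then v0 else fun j => -v0 j with hv
  have hvne : ∃ j, v j ≠ 0 := by
    by_contra h
    push_neg at h
    apply hv0ne
    funext j
    have := h j
    rw [hv] at this
    split at this
    · exact this
    · simpa using (by simpa using this : -v0 j = 0)
  have hcv : 0 ≤ pdot c v := by
    rw [hv]; split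
    · assumption
    · have : pdot c (fun j => -v0 j) = -pdot c v0 := by
        simp [pdot, Finset.sum_neg_distrib]
      rw [this]; linarith
  have htv : ∀ i ∈ tightSet A b x, pdot (A i) v = 0 := by
    intro i hi
    have h1 : pdot (A i) v0 = pdot (A i) y - pdot (A i) x := by
      simp [pdot, hv0, mul_sub, Finset.sum_sub_distrib]
    have h2 : pdot (A i) v0 = 0 := by
      rw [h1, hy i hi, mem_tightSet.1 hi]; ring
    rw [hv]; split
    · exact h2
    · have : pdot (A i) (fun j => -v0 j) = -pdot (A i) v0 := by
        simp [pdot]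
      rw [this, h2]; ring
  classical
  set J : Finset I := Finset.univ.filter (fun i => 0 < pdot (A i) v) with hJ
  have hray : ∀ t : ℝ, 0 ≤ t → ∀ i, i ∉ J → pdot (A i) (fun j => x j + t * v j) ≤ b i := by
    intro t ht i hiJ
    have hle : pdot (A i) v ≤ 0 := by
      by_contra h
      exact hiJ (by simp [hJ]; linarith)
    rw [pdot_add_smul]
    have : t * pdot (A i) v ≤ 0 := mul_nonpos_of_nonneg_of_nonpos ht hle
    have := hx i
    linarith
  by_cases hJne : J.Nonempty
  · -- move to first tight constraint
    obtain ⟨i₀, hi₀J, hi₀min⟩ := J.exists_min_image (fun i => (b i - pdot (A i) x) / pdot (A i) v) hJne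
    have hi₀pos : 0 < pdot (A i₀) v := by
      have := (Finset.mem_filter.1 hi₀J).2; exact this
    have hi₀nt : i₀ ∉ tightSet A b x := by
      intro h
      have := htv i₀ h
      linarith
    have hi₀lt : pdot (A i₀) x < b i₀ :=
      lt_of_le_of_ne (hx i₀) (fun h => hi₀nt (mem_tightSet.2 h))
    set t : ℝ := (b i₀ - pdot (A i₀) x) / pdot (A i₀) v with htdef
    have htpos : 0 < t := div_pos (by linarith) hi₀pos
    refine ⟨fun j => x j + t * v j, ?_, ?_, ?_⟩
    · intro i
      by_cases hiJ : i ∈ J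
      · have hipos : 0 < pdot (A i) v := (Finset.mem_filter.1 hiJ).2
        rw [pdot_add_smul]
        have h1 : t ≤ (b i - pdot (A i) x) / pdot (A i) v := hi₀min i hiJ
        have h2 : t * pdot (A i) v ≤ b i - pdot (A i) x := by
          rw [← le_div_iff₀ hipos] at *
          exact h1
        linarith
      · exact hray t htpos.le i hiJ
    · rw [pdot_add_smul]
      nlinarith
    · constructor
      · intro i hi
        apply mem_tightSet.2
        rw [pdot_add_smul, htv i hi, mem_tightSet.1 hi]; ring
      · intro hsub
        apply hi₀nt
        apply hsub
        apply mem_tightSet.2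
        rw [pdot_add_smul, htdef, div_mul_cancel₀ _ (ne_of_gt hi₀pos)]; ring
  · -- unbounded ray: contradiction
    exfalso
    obtain ⟨j₀, hj₀⟩ := hvne
    set t : ℝ := (2 * R + 1 + |x j₀|) / |v j₀| with htdef
    have hvabs : 0 < |v j₀| := abs_pos.2 hj₀
    have hR0 : 0 ≤ R := le_trans (abs_nonneg _) (hR x hx j₀)
    have htpos : 0 < t := div_pos (by positivity) hvabs
    have hxt : (fun j => x j + t * v j) ∈ Kset A b := by
      intro i
      exact hray t htpos.le i (fun h => hJne ⟨i, h⟩)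
    have := hR _ hxt j₀
    have h1 : |t * v j₀| - |x j₀| ≤ |x j₀ + t * v j₀| := by
      have := abs_add_le (x j₀) (t * v j₀)
      have h2 := abs_sub_abs_le_abs_sub (t * v j₀) (-(x j₀))
      simp only [sub_neg_eq_add, abs_neg] at h2
      calc |t * v j₀| - |x j₀| ≤ |t * v j₀ + x j₀| := h2
        _ = |x j₀ + t * v j₀| := by ring_nf
    have h3 : |t * v j₀| = t * |v j₀| := by
      rw [abs_mul, abs_of_pos htpos]
    have h4 : t * |v j₀| = 2 * R + 1 + |x j₀| := by
      rw [htdef, div_mul_cancel₀ _ (ne_of_gt hvabs)]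
    linarith

lemma exists_vert_ge {A : I → ι → ℝ} {b : I → ℝ} {R : ℝ}
    (hR : ∀ x ∈ Kset A b, ∀ j, |x j| ≤ R) (c : ι → ℝ)
    {x : ι → ℝ} (hx : x ∈ Kset A b) :
    ∃ w, IsVert A b w ∧ pdot c x ≤ pdot c w := by
  classical
  suffices H : ∀ n : ℕ, ∀ x ∈ Kset A b, Fintype.card I - (tightSet A b x).card ≤ n →
      ∃ w, IsVert A b w ∧ pdot c x ≤ pdot c w by
    exact H _ x hx le_rfl
  intro n
  induction n with
  | zero =>
    intro x hx hn
    have hcard : (tightSet A b x).card ≤ Fintype.card I := Finset.card_le_univ _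
    by_cases hv : IsVert A b x
    · exact ⟨x, hv, le_rfl⟩
    · obtain ⟨x', hx', _, hss⟩ := vert_step hR c hx hv
      have := Finset.card_lt_card hss
      have := Finset.card_le_univ (tightSet A b x')
      omega
  | succ n ih =>
    intro x hx hn
    by_cases hv : IsVert A b x
    · exact ⟨x, hv, le_rfl⟩
    · obtain ⟨x', hx', hle, hss⟩ := vert_step hR c hx hv
      have h1 := Finset.card_lt_card hss
      have h2 := Finset.card_le_univ (tightSet A b x')
      obtain ⟨w, hw, hw2⟩ := ih x' hx' (by omega)
      exact ⟨w, hw, le_trans hle hw2⟩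
end Polytope

section T
variable {d : ℕ} (m : Fin d → ℕ) (𝕊 : Finset (Finset (Fin d)))

abbrev PIdx : Type := Σ S : {S : Finset (Fin d) // S ∈ 𝕊}, Cell m S.1
open Classical in
noncomputable def cA : (PIdx m 𝕊 ⊕ PIdx m 𝕊 ⊕ Full m) → PIdx m 𝕊 → ℝ
| Sum.inl j => fun k => if k = j then 1 else 0
| Sum.inr (Sum.inl j) => fun k => if k = j then -1 else 0
| Sum.inr (Sum.inr x) => fun k => if proj m k.1.1 x = k.2 then -1 else 0
noncomputable def cB : (PIdx m 𝕊 ⊕ PIdx m 𝕊 ⊕ Full m) → ℝ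
| Sum.inl _ => (𝕊.card : ℝ) - 1
| Sum.inr (Sum.inl _) => 1
| Sum.inr (Sum.inr _) => 0
lemma pdot_inl (g : PIdx m 𝕊 → ℝ) (j : PIdx m 𝕊) : pdot (cA m 𝕊 (Sum.inl j)) g = g j := by
  classical simp [pdot, cA, ite_mul]
lemma pdot_inr_inl (g : PIdx m 𝕊 → ℝ) (j : PIdx m 𝕊) :
    pdot (cA m 𝕊 (Sum.inr (Sum.inl j))) g = -g j := by
  classical simp [pdot, cA, ite_mul]
lemma pdot_inr_inr (g : PIdx m 𝕊 → ℝ) (x : Full m) :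
    pdot (cA m 𝕊 (Sum.inr (Sum.inr x))) g =
      -∑ S : {S : Finset (Fin d) // S ∈ 𝕊}, g ⟨S, proj m S.1 x⟩ := by
  classical
  rw [pdot, ← Finset.univ_sigma_univ, Finset.sum_sigma, ← Finset.sum_neg_distrib]
  refine Finset.sum_congr rfl (fun S _ => ?_)
  simp [cA, ite_mul]

open Classical in
noncomputable def extg (g : PIdx m 𝕊 → ℝ) : ∀ S : Finset (Fin d), Cell m S → ℝ :=
  fun S y => if h : S ∈ 𝕊 then g ⟨⟨S, h⟩, y⟩ else 0

lemma extg_apply (g : PIdx m 𝕊 → ℝ) (S : Finset (Fin d)) (h : S ∈ 𝕊) (y : Cell m S) :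
    extg m 𝕊 g S y = g ⟨⟨S, h⟩, y⟩ := dif_pos h

lemma sum_over_S {β : Type*} [AddCommMonoid β] (h : Finset (Fin d) → β) :
    ∑ S ∈ 𝕊, h S = ∑ S : {S : Finset (Fin d) // S ∈ 𝕊}, h S.1 :=
  (Finset.sum_coe_sort 𝕊 h).symm

lemma extg_GPlus (g : PIdx m 𝕊 → ℝ) (hg : g ∈ Kset (cA m 𝕊) (cB m 𝕊)) :
    GPlus m 𝕊 (extg m 𝕊 g) := by
  constructor
  · intro S hS y
    rw [extg_apply m 𝕊 g S hS y]
    have := hg (Sum.inr (Sum.inl ⟨⟨S, hS⟩, y⟩))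
    rw [pdot_inr_inl] at this
    simp only [cB] at this
    linarith
  · intro x
    have := hg (Sum.inr (Sum.inr x))
    rw [pdot_inr_inr] at this
    simp only [cB] at this
    rw [sum_over_S]
    have heq : ∀ S : {S : Finset (Fin d) // S ∈ 𝕊},
        extg m 𝕊 g S.1 (proj m S.1 x) = g ⟨S, proj m S.1 x⟩ := by
      intro S
      rw [extg_apply m 𝕊 g S.1 S.2]
    rw [Finset.sum_congr rfl (fun S _ => heq S)]
    linarith

noncomputable def cvec (p : ∀ S : Finset (Fin d), Cell m S → ℝ) : PIdx m 𝕊 → ℝ :=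
  fun k => -(1 / (𝕊.card : ℝ)) * p k.1.1 k.2

lemma RL_extg (p : ∀ S : Finset (Fin d), Cell m S → ℝ) (g : PIdx m 𝕊 → ℝ) :
    RL m 𝕊 p (extg m 𝕊 g) = pdot (cvec m 𝕊 p) g := by
  rw [RL, pdot, sum_over_S 𝕊, ← Finset.univ_sigma_univ, Finset.sum_sigma, Finset.mul_sum]
  refine Finset.sum_congr rfl (fun S _ => ?_)
  rw [Finset.mul_sum]
  refine Finset.sum_congr rfl (fun y _ => ?_)
  rw [extg_apply m 𝕊 g S.1 S.2, cvec]
  ring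
end T

section T2
variable {d : ℕ} (m : Fin d → ℕ) (𝕊 : Finset (Finset (Fin d)))

noncomputable def trunc (f : ∀ S : Finset (Fin d), Cell m S → ℝ) : PIdx m 𝕊 → ℝ :=
  fun k => min (f k.1.1 k.2) ((𝕊.card : ℝ) - 1)

lemma trunc_mem_K (h𝕊 : 𝕊.Nonempty) (f : ∀ S : Finset (Fin d), Cell m S → ℝ)
    (hf : GPlus m 𝕊 f) : trunc m 𝕊 f ∈ Kset (cA m 𝕊) (cB m 𝕊) := by
  have hs1 : (1 : ℝ) ≤ (𝕊.card : ℝ) := by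
    have := Finset.card_pos.2 h𝕊
    exact_mod_cast this
  have hlow : ∀ k : PIdx m 𝕊, -1 ≤ trunc m 𝕊 f k := by
    intro k
    exact le_min (hf.1 k.1.1 k.1.2 k.2) (by linarith)
  intro i
  match i with
  | Sum.inl j =>
    rw [pdot_inl]
    exact min_le_right _ _
  | Sum.inr (Sum.inl j) =>
    rw [pdot_inr_inl]
    have := hlow j
    simp only [cB]
    linarith
  | Sum.inr (Sum.inr x) =>
    rw [pdot_inr_inr]
    simp only [cB, neg_le, neg_zero]
    -- show 0 ≤ ∑ S, trunc f ⟨S, proj⟩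
    by_cases hbig : ∀ S : {S : Finset (Fin d) // S ∈ 𝕊}, f S.1 (proj m S.1 x) ≤ (𝕊.card : ℝ) - 1
    · have : ∀ S : {S : Finset (Fin d) // S ∈ 𝕊},
          trunc m 𝕊 f ⟨S, proj m S.1 x⟩ = f S.1 (proj m S.1 x) := by
        intro S; exact min_eq_left (hbig S)
      rw [Finset.sum_congr rfl (fun S _ => this S)]
      rw [← sum_over_S 𝕊 (fun S => f S (proj m S x))]
      exact hf.2 x
    · push_neg at hbig
      obtain ⟨S₀, hS₀⟩ := hbig
      rw [← Finset.add_sum_erase _ _ (Finset.mem_univ S₀)]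
      have h1 : trunc m 𝕊 f ⟨S₀, proj m S₀.1 x⟩ = (𝕊.card : ℝ) - 1 :=
        min_eq_right hS₀.le
      have h2 : ∑ _S ∈ Finset.univ.erase S₀, (-1 : ℝ) ≤
          ∑ S ∈ Finset.univ.erase S₀, trunc m 𝕊 f ⟨S, proj m S.1 x⟩ :=
        Finset.sum_le_sum (fun S _ => hlow ⟨S, proj m S.1 x⟩)
      rw [Finset.sum_const, nsmul_eq_mul] at h2
      have hcard : (Finset.univ.erase S₀).card = 𝕊.card - 1 := by
        rw [Finset.card_erase_of_mem (Finset.mem_univ S₀), Finset.card_univ, Fintype.card_coe]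
      have hcard' : ((Finset.univ.erase S₀).card : ℝ) = (𝕊.card : ℝ) - 1 := by
        rw [hcard]
        have : 1 ≤ 𝕊.card := Finset.card_pos.2 h𝕊
        push_cast [Nat.cast_sub this]
        ring
      rw [hcard'] at h2
      rw [h1]
      linarith

lemma RL_le_trunc (hp : IsFamily m 𝕊 p) (f : ∀ S : Finset (Fin d), Cell m S → ℝ) :
    RL m 𝕊 p f ≤ RL m 𝕊 p (extg m 𝕊 (trunc m 𝕊 f)) := by
  rw [RL, RL, neg_mul, neg_mul, neg_le_neg_iff]
  apply mul_le_mul_of_nonneg_left _ (by positivity)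
  apply Finset.sum_le_sum
  intro S hS
  apply Finset.sum_le_sum
  intro y _
  apply mul_le_mul_of_nonneg_right _ ((hp S hS).1 y)
  rw [extg_apply m 𝕊 _ S hS]
  exact min_le_left _ _

lemma K_bounded (g : PIdx m 𝕊 → ℝ) (hg : g ∈ Kset (cA m 𝕊) (cB m 𝕊)) (j : PIdx m 𝕊) :
    |g j| ≤ max ((𝕊.card : ℝ) - 1) 1 := by
  have h1 := hg (Sum.inl j); rw [pdot_inl] at h1
  have h2 := hg (Sum.inr (Sum.inl j)); rw [pdot_inr_inl] at h2
  simp only [cB] at h1 h2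
  rw [abs_le]
  constructor
  · have := le_max_right ((𝕊.card : ℝ) - 1) 1
    linarith
  · exact le_trans h1 (le_max_left _ _)
end T2

section T3
variable {d : ℕ} (m : Fin d → ℕ) (𝕊 : Finset (Finset (Fin d)))

lemma sum_marg_eq {S : Finset (Fin d)} (T : Finset (Fin d)) (h : T ⊆ S)
    (pS : Cell m S → ℝ) (A : Finset (Cell m T)) :
    ∑ z ∈ A, marg m T h pS z = ∑ y : Cell m S, if projSub m h y ∈ A then pS y else 0 := by
  classical
  simp only [marg]
  rw [Finset.sum_comm]
  refine Finset.sum_congr rfl (fun y _ => ?_)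
  exact Finset.sum_ite_eq A (projSub m h y) (fun _ => pS y)

lemma marg_nonneg {S : Finset (Fin d)} (T : Finset (Fin d)) (h : T ⊆ S)
    (pS : Cell m S → ℝ) (hpS : ∀ y, 0 ≤ pS y) (z : Cell m T) : 0 ≤ marg m T h pS z := by
  apply Finset.sum_nonneg
  intro y _
  split
  · exact hpS y
  · exact le_rfl

lemma sum_marg_total {S : Finset (Fin d)} (T : Finset (Fin d)) (h : T ⊆ S)
    (pS : Cell m S → ℝ) : ∑ z : Cell m T, marg m T h pS z = ∑ y : Cell m S, pS y := by
  classical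
  simp only [marg]
  rw [Finset.sum_comm]
  refine Finset.sum_congr rfl (fun y _ => ?_)
  rw [Finset.sum_ite_eq Finset.univ (projSub m h y) (fun _ => pS y), if_pos (Finset.mem_univ _)]

open Classical in
noncomputable def tvf (S₁ S₂ : Finset (Fin d)) (A : Finset (Cell m (S₁ ∩ S₂))) (ε : ℝ) :
    ∀ S : Finset (Fin d), Cell m S → ℝ :=
  fun S y =>
    if S₁ = S₂ then 0 else
    (if h : S = S₁ then
      (if projSub m (show S₁ ∩ S₂ ⊆ S by rw [h]; exact Finset.inter_subset_left) y ∈ A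
        then ε else 0)
     else 0) +
    (if h : S = S₂ then
      (if projSub m (show S₁ ∩ S₂ ⊆ S by rw [h]; exact Finset.inter_subset_right) y ∈ A
        then -ε else 0)
     else 0)

lemma tvf_GPlus (S₁ S₂ : Finset (Fin d)) (h₁ : S₁ ∈ 𝕊) (h₂ : S₂ ∈ 𝕊)
    (A : Finset (Cell m (S₁ ∩ S₂))) (ε : ℝ) (hε : |ε| ≤ 1) :
    GPlus m 𝕊 (tvf m S₁ S₂ A ε) := by
  classical
  obtain ⟨hε1, hε2⟩ := abs_le.1 hε
  constructor
  · intro S _ y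
    unfold tvf
    split_ifs <;> linarith
  · intro x
    by_cases hne : S₁ = S₂
    · simp [tvf, hne]
    · have hsplit : ∀ S ∈ 𝕊, tvf m S₁ S₂ A ε S (proj m S x) =
        (if h : S = S₁ then
          (if projSub m (show S₁ ∩ S₂ ⊆ S by rw [h]; exact Finset.inter_subset_left)
              (proj m S x) ∈ A then ε else 0) else 0) +
        (if h : S = S₂ then
          (if projSub m (show S₁ ∩ S₂ ⊆ S by rw [h]; exact Finset.inter_subset_right)
              (proj m S x) ∈ A then -ε else 0) else 0) := by
        intro S _
        unfold tvf
        rw [if_neg hne]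
      rw [Finset.sum_congr rfl hsplit, Finset.sum_add_distrib]
      rw [Finset.sum_eq_single_of_mem S₁ h₁ (fun S _ hS => dif_neg hS),
          Finset.sum_eq_single_of_mem S₂ h₂ (fun S _ hS => dif_neg hS),
          dif_pos rfl, dif_pos rfl]
      have key : ∀ (hL : S₁ ∩ S₂ ⊆ S₁) (hR : S₁ ∩ S₂ ⊆ S₂),
          projSub m hL (proj m S₁ x) = projSub m hR (proj m S₂ x) := by
        intro hL hR; rfl
      rw [key _ Finset.inter_subset_right]
      split <;> simp
end T3

section T4
variable {d : ℕ} (m : Fin d → ℕ) (𝕊 : Finset (Finset (Fin d)))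

lemma tvf_term1 (S₁ S₂ : Finset (Fin d)) (A : Finset (Cell m (S₁ ∩ S₂))) (ε : ℝ)
    (y : Cell m S₁) (hL : S₁ ∩ S₂ ⊆ S₁) (c : ℝ) :
    (if projSub m hL y ∈ A then ε else 0) * c =
      ε * (if projSub m (Finset.inter_subset_left : S₁ ∩ S₂ ⊆ S₁) y ∈ A then c else 0) := by
  have e : hL = (Finset.inter_subset_left : S₁ ∩ S₂ ⊆ S₁) := rfl
  rw [e]
  by_cases hc : projSub m (Finset.inter_subset_left : S₁ ∩ S₂ ⊆ S₁) y ∈ A <;> simp [hc]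

lemma tvf_term2 (S₁ S₂ : Finset (Fin d)) (A : Finset (Cell m (S₁ ∩ S₂))) (ε : ℝ)
    (y : Cell m S₂) (hR : S₁ ∩ S₂ ⊆ S₂) (c : ℝ) :
    (if projSub m hR y ∈ A then -ε else 0) * c =
      -(ε * (if projSub m (Finset.inter_subset_right : S₁ ∩ S₂ ⊆ S₂) y ∈ A then c else 0)) := by
  have e : hR = (Finset.inter_subset_right : S₁ ∩ S₂ ⊆ S₂) := rfl
  rw [e]
  by_cases hc : projSub m (Finset.inter_subset_right : S₁ ∩ S₂ ⊆ S₂) y ∈ A <;> simp [hc]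

lemma RL_tvf (p : ∀ S : Finset (Fin d), Cell m S → ℝ)
    (S₁ S₂ : Finset (Fin d)) (h₁ : S₁ ∈ 𝕊) (h₂ : S₂ ∈ 𝕊) (hne : S₁ ≠ S₂)
    (A : Finset (Cell m (S₁ ∩ S₂))) (ε : ℝ) :
    RL m 𝕊 p (tvf m S₁ S₂ A ε) =
      -(1 / (𝕊.card : ℝ)) *
        (ε * ∑ z ∈ A, marg m (S₁ ∩ S₂) Finset.inter_subset_left (p S₁) z
         - ε * ∑ z ∈ A, marg m (S₁ ∩ S₂) Finset.inter_subset_right (p S₂) z) := by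
  classical
  rw [RL]
  congr 1
  have hsplit : ∀ S ∈ 𝕊, ∑ y, tvf m S₁ S₂ A ε S y * p S y =
      (∑ y, (if h : S = S₁ then
          (if projSub m (show S₁ ∩ S₂ ⊆ S by rw [h]; exact Finset.inter_subset_left)
              y ∈ A then ε else 0) else 0) * p S y) +
      (∑ y, (if h : S = S₂ then
          (if projSub m (show S₁ ∩ S₂ ⊆ S by rw [h]; exact Finset.inter_subset_right)
              y ∈ A then -ε else 0) else 0) * p S y) := by
    intro S _
    rw [← Finset.sum_add_distrib]
    refine Finset.sum_congr rfl (fun y _ => ?_)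
    unfold tvf
    rw [if_neg hne, add_mul]
  rw [Finset.sum_congr rfl hsplit, Finset.sum_add_distrib]
  have e1 : ∑ S ∈ 𝕊, (∑ y, (if h : S = S₁ then
          (if projSub m (show S₁ ∩ S₂ ⊆ S by rw [h]; exact Finset.inter_subset_left)
              y ∈ A then ε else 0) else 0) * p S y) =
      ε * ∑ z ∈ A, marg m (S₁ ∩ S₂) Finset.inter_subset_left (p S₁) z := by
    rw [Finset.sum_eq_single_of_mem S₁ h₁
      (fun S _ hS => by simp [dif_neg hS])]
    rw [sum_marg_eq m (S₁ ∩ S₂) Finset.inter_subset_left (p S₁) A, Finset.mul_sum]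
    refine Finset.sum_congr rfl (fun y _ => ?_)
    rw [dif_pos rfl]
    exact tvf_term1 m S₁ S₂ A ε y _ (p S₁ y)
  have e2 : ∑ S ∈ 𝕊, (∑ y, (if h : S = S₂ then
          (if projSub m (show S₁ ∩ S₂ ⊆ S by rw [h]; exact Finset.inter_subset_right)
              y ∈ A then -ε else 0) else 0) * p S y) =
      -(ε * ∑ z ∈ A, marg m (S₁ ∩ S₂) Finset.inter_subset_right (p S₂) z) := by
    rw [Finset.sum_eq_single_of_mem S₂ h₂
      (fun S _ hS => by simp [dif_neg hS])]
    rw [sum_marg_eq m (S₁ ∩ S₂) Finset.inter_subset_right (p S₂) A, Finset.mul_sum,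
      ← Finset.sum_neg_distrib]
    refine Finset.sum_congr rfl (fun y _ => ?_)
    rw [dif_pos rfl]
    exact tvf_term2 m S₁ S₂ A ε y _ (p S₂ y)
  rw [e1, e2]
  ring
end T4


section T5
variable {d : ℕ} (m : Fin d → ℕ) (𝕊 : Finset (Finset (Fin d)))
  (p : ∀ S : Finset (Fin d), Cell m S → ℝ)

lemma GPlus_zero : GPlus m 𝕊 (fun _ _ => (0:ℝ)) :=
  ⟨fun _ _ _ => by norm_num, fun x => by simp⟩

lemma RL_zero : RL m 𝕊 p (fun _ _ => (0:ℝ)) = 0 := by simp [RL]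

lemma RL_le_one (h𝕊 : 𝕊.Nonempty) (hp : IsFamily m 𝕊 p)
    (f' : ∀ S : Finset (Fin d), Cell m S → ℝ) (hf' : GPlus m 𝕊 f') : RL m 𝕊 p f' ≤ 1 := by
  have hs : (0:ℝ) < 𝕊.card := by exact_mod_cast Finset.card_pos.2 h𝕊
  have hT : ∀ S ∈ 𝕊, (-1:ℝ) ≤ ∑ y, f' S y * p S y := by
    intro S hS
    have h1 : ∑ y, (-1 : ℝ) * p S y ≤ ∑ y, f' S y * p S y :=
      Finset.sum_le_sum (fun y _ => mul_le_mul_of_nonneg_right (hf'.1 S hS y) ((hp S hS).1 y))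
    have h2 : ∑ y, (-1:ℝ) * p S y = -1 := by
      rw [← Finset.mul_sum, (hp S hS).2]; ring
    linarith
  have hsum : -(𝕊.card : ℝ) ≤ ∑ S ∈ 𝕊, ∑ y, f' S y * p S y := by
    have h3 : ∑ _S ∈ 𝕊, (-1:ℝ) ≤ ∑ S ∈ 𝕊, ∑ y, f' S y * p S y :=
      Finset.sum_le_sum hT
    rw [Finset.sum_const, nsmul_eq_mul] at h3
    linarith
  rw [RL]
  have h4 := mul_le_mul_of_nonneg_left hsum (le_of_lt (one_div_pos.2 hs))
  have h5 : 1/(𝕊.card:ℝ) * (-(𝕊.card:ℝ)) = -1 := by field_simp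
  rw [h5] at h4
  nlinarith

lemma Rix_bddAbove (h𝕊 : 𝕊.Nonempty) (hp : IsFamily m 𝕊 p) :
    BddAbove {t | ∃ f, GPlus m 𝕊 f ∧ t = RL m 𝕊 p f} := by
  refine ⟨1, ?_⟩
  rintro t ⟨f', hf', rfl⟩
  exact RL_le_one m 𝕊 p h𝕊 hp f' hf'

lemma Rix_nonneg (h𝕊 : 𝕊.Nonempty) (hp : IsFamily m 𝕊 p) : 0 ≤ Rix m 𝕊 p := by
  apply le_csSup (Rix_bddAbove m 𝕊 p h𝕊 hp)
  exact ⟨fun _ _ => 0, GPlus_zero m 𝕊, (RL_zero m 𝕊 p).symm⟩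

lemma RL_le_Rix (h𝕊 : 𝕊.Nonempty) (hp : IsFamily m 𝕊 p)
    (f' : ∀ S : Finset (Fin d), Cell m S → ℝ) (hf' : GPlus m 𝕊 f') :
    RL m 𝕊 p f' ≤ Rix m 𝕊 p :=
  le_csSup (Rix_bddAbove m 𝕊 p h𝕊 hp) ⟨f', hf', rfl⟩

lemma dTV_le_two {S S' : Finset (Fin d)} (T : Finset (Fin d)) (hL : T ⊆ S) (hR : T ⊆ S')
    (pS : Cell m S → ℝ) (qS : Cell m S' → ℝ) (hps : IsPMF pS) (hqs : IsPMF qS)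
    (A : Finset (Cell m T)) :
    |∑ z ∈ A, (marg m T hL pS z - marg m T hR qS z)| ≤ 2 := by
  have h1 : |∑ z ∈ A, (marg m T hL pS z - marg m T hR qS z)| ≤
      ∑ z ∈ A, |marg m T hL pS z - marg m T hR qS z| := Finset.abs_sum_le_sum_abs _ _
  have h2 : ∑ z ∈ A, |marg m T hL pS z - marg m T hR qS z| ≤
      ∑ z : Cell m T, |marg m T hL pS z - marg m T hR qS z| :=
    Finset.sum_le_sum_of_subset_of_nonneg A.subset_univ (fun _ _ _ => abs_nonneg _)
  have h3 : ∑ z : Cell m T, |marg m T hL pS z - marg m T hR qS z| ≤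
      ∑ z : Cell m T, (marg m T hL pS z + marg m T hR qS z) := by
    apply Finset.sum_le_sum
    intro z _
    have hu := marg_nonneg m T hL pS hps.1 z
    have hv := marg_nonneg m T hR qS hqs.1 z
    rw [abs_sub_le_iff]
    constructor <;> linarith
  rw [Finset.sum_add_distrib, sum_marg_total, sum_marg_total, hps.2, hqs.2] at h3
  linarith
end T5

section T6
variable {d : ℕ} (m : Fin d → ℕ) (𝕊 : Finset (Finset (Fin d)))

noncomputable def vertW : Finset (PIdx m 𝕊 → ℝ) :=
  (finite_vert (cA m 𝕊) (cB m 𝕊)).toFinset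

def TVI : Type :=
  (Σ SS : {S : Finset (Fin d) // S ∈ 𝕊} × {S : Finset (Fin d) // S ∈ 𝕊},
    Finset (Cell m (SS.1.1 ∩ SS.2.1))) × Bool

noncomputable instance : Fintype (TVI m 𝕊) := by unfold TVI; infer_instance

noncomputable def FIdx : Type := {g // g ∈ vertW m 𝕊} ⊕ (TVI m 𝕊 ⊕ Unit)

noncomputable instance : Fintype (FIdx m 𝕊) := by unfold FIdx; infer_instance

noncomputable def fam : FIdx m 𝕊 → ∀ S : Finset (Fin d), Cell m S → ℝ
| Sum.inl w => extg m 𝕊 w.1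
| Sum.inr (Sum.inl i) => tvf m i.1.1.1.1 i.1.1.2.1 i.1.2 (if i.2 then 1 else -1)
| Sum.inr (Sum.inr _) => fun _ _ => 0

lemma mem_vertW {g : PIdx m 𝕊 → ℝ} : g ∈ vertW m 𝕊 ↔ IsVert (cA m 𝕊) (cB m 𝕊) g := by
  simp [vertW, Set.Finite.mem_toFinset]

lemma fam_GPlus (i : FIdx m 𝕊) : GPlus m 𝕊 (fam m 𝕊 i) := by
  match i with
  | Sum.inl w =>
    exact extg_GPlus m 𝕊 w.1 ((mem_vertW m 𝕊).1 w.2).1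
  | Sum.inr (Sum.inl i) =>
    apply tvf_GPlus m 𝕊 _ _ i.1.1.1.2 i.1.1.2.2
    split <;> simp
  | Sum.inr (Sum.inr _) => exact GPlus_zero m 𝕊
end T6

/-- Proposition: facet decomposition of the incompatibility index. -/
theorem statement_5 {d : ℕ} (m : Fin d → ℕ) (hm : ∀ j, 0 < m j)
    (𝕊 : Finset (Finset (Fin d))) (h𝕊 : 𝕊.Nonempty) (hSne : ∀ S ∈ 𝕊, S.Nonempty) :
    ∃ (F : ℕ) (f : Fin F → ∀ S : Finset (Fin d), Cell m S → ℝ),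
      (∀ ℓ, GPlus m 𝕊 (f ℓ)) ∧
      ∀ p : ∀ S : Finset (Fin d), Cell m S → ℝ, IsFamily m 𝕊 p →
        (max (sSup {t | ∃ ℓ : Fin F, t = RL m 𝕊 p (f ℓ)})
            ((1 / (𝕊.card : ℝ)) *
              sSup {t | ∃ S₁ ∈ 𝕊, ∃ S₂ ∈ 𝕊, (S₁ ∩ S₂).Nonempty ∧
                t = dTV (marg m (S₁ ∩ S₂) inter_subset_left (p S₁))
                      (marg m (S₁ ∩ S₂) inter_subset_right (p S₂))}) ≤ Rix m 𝕊 p) ∧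
        (Rix m 𝕊 p ≤ sSup {t | ∃ ℓ : Fin F, t = max (RL m 𝕊 p (f ℓ)) 0} +
            (𝕊.card : ℝ) * 2 ^ (𝕊.card + 2) *
              sSup {t | ∃ S₁ ∈ 𝕊, ∃ S₂ ∈ 𝕊, (S₁ ∩ S₂).Nonempty ∧
                t = dTV (marg m (S₁ ∩ S₂) inter_subset_left (p S₁))
                      (marg m (S₁ ∩ S₂) inter_subset_right (p S₂))}) ∧
        (Consistent m 𝕊 p →
          Rix m 𝕊 p = sSup {t | ∃ ℓ : Fin F, t = max (RL m 𝕊 p (f ℓ)) 0}) := by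
  classical
  have hs : (0:ℝ) < 𝕊.card := by exact_mod_cast Finset.card_pos.2 h𝕊
  refine ⟨Fintype.card (FIdx m 𝕊),
    fun ℓ => fam m 𝕊 ((Fintype.equivFin (FIdx m 𝕊)).symm ℓ),
    fun ℓ => fam_GPlus m 𝕊 _, ?_⟩
  intro p hp
  have hRix0 : 0 ≤ Rix m 𝕊 p := Rix_nonneg m 𝕊 p h𝕊 hp
  have hmemFam : ∀ i : FIdx m 𝕊, ∃ ℓ : Fin (Fintype.card (FIdx m 𝕊)),
      fam m 𝕊 ((Fintype.equivFin (FIdx m 𝕊)).symm ℓ) = fam m 𝕊 i :=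
    fun i => ⟨Fintype.equivFin _ i, by rw [Equiv.symm_apply_apply]⟩
  -- boundedness of the finite-family sets
  have hSetF_bdd : BddAbove {t | ∃ ℓ : Fin (Fintype.card (FIdx m 𝕊)),
      t = RL m 𝕊 p (fam m 𝕊 ((Fintype.equivFin (FIdx m 𝕊)).symm ℓ))} := by
    have : {t | ∃ ℓ : Fin (Fintype.card (FIdx m 𝕊)),
        t = RL m 𝕊 p (fam m 𝕊 ((Fintype.equivFin (FIdx m 𝕊)).symm ℓ))} =
        Set.range (fun ℓ : Fin (Fintype.card (FIdx m 𝕊)) =>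
          RL m 𝕊 p (fam m 𝕊 ((Fintype.equivFin (FIdx m 𝕊)).symm ℓ))) := by
      ext t; simp [Set.range, eq_comm]
    rw [this]
    exact (Set.finite_range _).bddAbove
  have hMax_bdd : BddAbove {t | ∃ ℓ : Fin (Fintype.card (FIdx m 𝕊)),
      t = max (RL m 𝕊 p (fam m 𝕊 ((Fintype.equivFin (FIdx m 𝕊)).symm ℓ))) 0} := by
    have : {t | ∃ ℓ : Fin (Fintype.card (FIdx m 𝕊)),
        t = max (RL m 𝕊 p (fam m 𝕊 ((Fintype.equivFin (FIdx m 𝕊)).symm ℓ))) 0} =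
        Set.range (fun ℓ : Fin (Fintype.card (FIdx m 𝕊)) =>
          max (RL m 𝕊 p (fam m 𝕊 ((Fintype.equivFin (FIdx m 𝕊)).symm ℓ))) 0) := by
      ext t; simp [Set.range, eq_comm]
    rw [this]
    exact (Set.finite_range _).bddAbove
  have h0M : 0 ≤ sSup {t | ∃ ℓ : Fin (Fintype.card (FIdx m 𝕊)),
      t = max (RL m 𝕊 p (fam m 𝕊 ((Fintype.equivFin (FIdx m 𝕊)).symm ℓ))) 0} := by
    obtain ⟨ℓ, hℓ⟩ := hmemFam (Sum.inr (Sum.inr ()))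
    apply le_csSup hMax_bdd
    refine ⟨ℓ, ?_⟩
    rw [hℓ, show (fam m 𝕊 (Sum.inr (Sum.inr ())) : ∀ S : Finset (Fin d), Cell m S → ℝ) =
      (fun _ _ => 0) from rfl, RL_zero m 𝕊 p]
    simp
  -- bddAbove of the pair set, and its nonnegativity
  have hPair_bdd : BddAbove {t | ∃ S₁ ∈ 𝕊, ∃ S₂ ∈ 𝕊, (S₁ ∩ S₂).Nonempty ∧
      t = dTV (marg m (S₁ ∩ S₂) inter_subset_left (p S₁))
            (marg m (S₁ ∩ S₂) inter_subset_right (p S₂))} := by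
    refine ⟨2, ?_⟩
    rintro t ⟨S₁, h₁, S₂, h₂, hnon, rfl⟩
    rw [dTV]
    apply Real.sSup_le _ (by norm_num)
    rintro t ⟨A, rfl⟩
    exact dTV_le_two m (S₁ ∩ S₂) inter_subset_left inter_subset_right (p S₁) (p S₂) (hp S₁ h₁) (hp S₂ h₂) A
  have hPair0 : 0 ≤ sSup {t | ∃ S₁ ∈ 𝕊, ∃ S₂ ∈ 𝕊, (S₁ ∩ S₂).Nonempty ∧
      t = dTV (marg m (S₁ ∩ S₂) inter_subset_left (p S₁))
            (marg m (S₁ ∩ S₂) inter_subset_right (p S₂))} := by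
    obtain ⟨S₀, hS₀⟩ := h𝕊
    have hnon : (S₀ ∩ S₀).Nonempty := by rw [Finset.inter_self]; exact hSne S₀ hS₀
    have htv0 : 0 ≤ dTV (marg m (S₀ ∩ S₀) inter_subset_left (p S₀))
        (marg m (S₀ ∩ S₀) inter_subset_right (p S₀)) := by
      rw [dTV]
      apply le_csSup
      · refine ⟨2, ?_⟩
        rintro t ⟨A, rfl⟩
        exact dTV_le_two m (S₀ ∩ S₀) inter_subset_left inter_subset_right (p S₀) (p S₀) (hp S₀ hS₀) (hp S₀ hS₀) A
      · exact ⟨∅, by simp⟩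
    exact le_trans htv0 (le_csSup hPair_bdd ⟨S₀, hS₀, S₀, hS₀, hnon, rfl⟩)
  -- the key upper bound through the polytope vertices
  have hRM : Rix m 𝕊 p ≤ sSup {t | ∃ ℓ : Fin (Fintype.card (FIdx m 𝕊)),
      t = max (RL m 𝕊 p (fam m 𝕊 ((Fintype.equivFin (FIdx m 𝕊)).symm ℓ))) 0} := by
    rw [Rix]
    apply Real.sSup_le _ h0M
    rintro t ⟨f', hf', rfl⟩
    obtain ⟨w, hw, hwle⟩ := exists_vert_ge (K_bounded m 𝕊) (cvec m 𝕊 p)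
      (trunc_mem_K m 𝕊 h𝕊 f' hf')
    obtain ⟨ℓ, hℓ⟩ := hmemFam (Sum.inl ⟨w, (mem_vertW m 𝕊).2 hw⟩)
    calc RL m 𝕊 p f' ≤ RL m 𝕊 p (extg m 𝕊 (trunc m 𝕊 f')) := RL_le_trunc m 𝕊 hp f'
      _ = pdot (cvec m 𝕊 p) (trunc m 𝕊 f') := RL_extg m 𝕊 p (trunc m 𝕊 f')
      _ ≤ pdot (cvec m 𝕊 p) w := hwle
      _ = RL m 𝕊 p (extg m 𝕊 w) := (RL_extg m 𝕊 p w).symm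
      _ ≤ max (RL m 𝕊 p (extg m 𝕊 w)) 0 := le_max_left _ _
      _ ≤ _ := le_csSup hMax_bdd ⟨ℓ, by rw [hℓ]; rfl⟩
  refine ⟨?_, ?_, ?_⟩
  · -- lower bounds
    apply max_le
    · apply Real.sSup_le _ hRix0
      rintro t ⟨ℓ, rfl⟩
      exact RL_le_Rix m 𝕊 p h𝕊 hp _ (fam_GPlus m 𝕊 _)
    · have h2 : sSup {t | ∃ S₁ ∈ 𝕊, ∃ S₂ ∈ 𝕊, (S₁ ∩ S₂).Nonempty ∧
          t = dTV (marg m (S₁ ∩ S₂) inter_subset_left (p S₁))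
                (marg m (S₁ ∩ S₂) inter_subset_right (p S₂))} ≤
          (𝕊.card : ℝ) * Rix m 𝕊 p := by
        apply Real.sSup_le _ (mul_nonneg hs.le hRix0)
        rintro t ⟨S₁, h₁, S₂, h₂, hnon, rfl⟩
        rw [dTV]
        apply Real.sSup_le _ (mul_nonneg hs.le hRix0)
        rintro t ⟨A, rfl⟩
        by_cases hSeq : S₁ = S₂
        · subst hSeq
          have huv : marg m (S₁ ∩ S₁) Finset.inter_subset_left (p S₁) =
              marg m (S₁ ∩ S₁) Finset.inter_subset_right (p S₁) := rfl
          rw [huv]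
          simpa using mul_nonneg hs.le hRix0
        · rw [Finset.sum_sub_distrib]
          rcases le_total (∑ z ∈ A, marg m (S₁ ∩ S₂) Finset.inter_subset_left (p S₁) z)
            (∑ z ∈ A, marg m (S₁ ∩ S₂) Finset.inter_subset_right (p S₂) z) with hM | hM
          · have hRL := RL_tvf m 𝕊 p S₁ S₂ h₁ h₂ hSeq A 1
            have hle := RL_le_Rix m 𝕊 p h𝕊 hp _
              (tvf_GPlus m 𝕊 S₁ S₂ h₁ h₂ A 1 (by norm_num))
            rw [hRL] at hle
            have h4 := mul_le_mul_of_nonneg_left hle hs.le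
            rw [abs_of_nonpos (by linarith)]
            have hE : (𝕊.card:ℝ) * (-(1/(𝕊.card:ℝ)) *
                (1 * ∑ z ∈ A, marg m (S₁ ∩ S₂) Finset.inter_subset_left (p S₁) z -
                 1 * ∑ z ∈ A, marg m (S₁ ∩ S₂) Finset.inter_subset_right (p S₂) z)) =
                -(∑ z ∈ A, marg m (S₁ ∩ S₂) Finset.inter_subset_left (p S₁) z -
                  ∑ z ∈ A, marg m (S₁ ∩ S₂) Finset.inter_subset_right (p S₂) z) := by
              field_simp
            rw [hE] at h4
            exact h4
          · have hRL := RL_tvf m 𝕊 p S₁ S₂ h₁ h₂ hSeq A (-1)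
            have hle := RL_le_Rix m 𝕊 p h𝕊 hp _
              (tvf_GPlus m 𝕊 S₁ S₂ h₁ h₂ A (-1) (by norm_num))
            rw [hRL] at hle
            have h4 := mul_le_mul_of_nonneg_left hle hs.le
            rw [abs_of_nonneg (by linarith)]
            have hE : (𝕊.card:ℝ) * (-(1/(𝕊.card:ℝ)) *
                ((-1) * ∑ z ∈ A, marg m (S₁ ∩ S₂) Finset.inter_subset_left (p S₁) z -
                 (-1) * ∑ z ∈ A, marg m (S₁ ∩ S₂) Finset.inter_subset_right (p S₂) z)) =
                (∑ z ∈ A, marg m (S₁ ∩ S₂) Finset.inter_subset_left (p S₁) z -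
                  ∑ z ∈ A, marg m (S₁ ∩ S₂) Finset.inter_subset_right (p S₂) z) := by
              field_simp
              ring
            rw [hE] at h4
            exact h4
      have h3 := mul_le_mul_of_nonneg_left h2 (le_of_lt (one_div_pos.2 hs))
      have hE2 : 1/(𝕊.card:ℝ) * ((𝕊.card:ℝ) * Rix m 𝕊 p) = Rix m 𝕊 p := by
        field_simp
      rw [hE2] at h3
      exact h3
  · -- upper bound
    refine le_trans hRM (le_add_of_nonneg_right (mul_nonneg (by positivity) hPair0))
  · -- consistent case
    intro _hcons
    refine le_antisymm hRM ?_
    apply Real.sSup_le _ hRix0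
    rintro t ⟨ℓ, rfl⟩
    exact max_le (RL_le_Rix m 𝕊 p h𝕊 hp _ (fam_GPlus m 𝕊 _)) hRix0
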